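/- arXiv:math/0611377 — 2 statements merged into one kernel-verified Lean document; each statement's English description precedes it below -/
import Mathlib

section
/- Let u ∈ G(ℝ^d∖{0}), u ≠ 0, be homogeneous of degree α ∈ ℝ. Then u is extendable: there exists û ∈ G(ℝ^d) such that û|_{ℝ^d∖{0}} = u in G(ℝ^d∖{0}). -/
open Set Filter Topology MeasureTheory

noncomputable section

variable {E F : Type*} [NormedAddCommGroup E] [NormedSpace ℝ E]
  [NormedAddCommGroup F] [NormedSpace ℝ F]

/-- A net of smooth functions, indexed by `ε ∈ (0,1]`, is *moderate* on the open set `Ω`: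
all iterated derivatives are `O(ε^{-N})` on compact subsets, for some `N`. -/
def IsModerate (Ω : Set E) (u : ℝ → E → F) : Prop :=
  (∀ ε ∈ Set.Ioc (0:ℝ) 1, ContDiffOn ℝ (⊤:ℕ∞) (u ε) Ω) ∧
  ∀ K : Set E, IsCompact K → K ⊆ Ω → ∀ n : ℕ, ∃ N : ℕ, ∃ C : ℝ, ∃ ε₀ : ℝ, 0 < ε₀ ∧
    ∀ ε : ℝ, 0 < ε → ε < ε₀ → ∀ x ∈ K,
      ‖iteratedFDerivWithin ℝ n (u ε) Ω x‖ ≤ C * ε ^ (-(N:ℤ))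

/-- A net of smooth functions is *negligible* on `Ω`: all iterated derivatives are `O(ε^m)`
on compact subsets, for every `m`. -/
def IsNegligible (Ω : Set E) (u : ℝ → E → F) : Prop :=
  (∀ ε ∈ Set.Ioc (0:ℝ) 1, ContDiffOn ℝ (⊤:ℕ∞) (u ε) Ω) ∧
  ∀ K : Set E, IsCompact K → K ⊆ Ω → ∀ n : ℕ, ∀ m : ℕ, ∃ C : ℝ, ∃ ε₀ : ℝ, 0 < ε₀ ∧
    ∀ ε : ℝ, 0 < ε → ε < ε₀ → ∀ x ∈ K,
      ‖iteratedFDerivWithin ℝ n (u ε) Ω x‖ ≤ C * ε ^ m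

/-- A net of numbers is *moderate*: `O(ε^{-N})` for some `N`. -/
def NumModerate (c : ℝ → F) : Prop :=
  ∃ N : ℕ, ∃ C : ℝ, ∃ ε₀ : ℝ, 0 < ε₀ ∧ ∀ ε : ℝ, 0 < ε → ε < ε₀ → ‖c ε‖ ≤ C * ε ^ (-(N:ℤ))

/-- A net of numbers is *negligible*: `O(ε^m)` for every `m`. -/
def NumNegligible (c : ℝ → F) : Prop :=
  ∀ m : ℕ, ∃ C : ℝ, ∃ ε₀ : ℝ, 0 < ε₀ ∧ ∀ ε : ℝ, 0 < ε → ε < ε₀ → ‖c ε‖ ≤ C * ε ^ m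

/-- A net of points is a representative of a *compactly supported generalized point* of `Ω`. -/
def CompactlySupportedPoint (Ω : Set E) (a : ℝ → E) : Prop :=
  ∃ K : Set E, IsCompact K ∧ K ⊆ Ω ∧ ∃ ε₀ : ℝ, 0 < ε₀ ∧ ∀ ε : ℝ, 0 < ε → ε < ε₀ → a ε ∈ K

/-- The partial order on generalized reals, on representatives: `a ≤ b` iff `b - a` has a
representative with all terms nonnegative, i.e. `a ε + n ε ≤ b ε` for some negligible `n`. -/
def TildeLe (a b : ℝ → ℝ) : Prop :=
  ∃ n : ℝ → ℝ, NumNegligible n ∧ ∀ ε ∈ Set.Ioc (0:ℝ) 1, a ε + n ε ≤ b ε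

/-- Strict order `a << b`: `b - a` is strictly positive, i.e. `b ε - a ε > ε^m` for some `m`
and all small `ε`. -/
def TildeLt (a b : ℝ → ℝ) : Prop :=
  ∃ m : ℕ, ∃ ε₀ : ℝ, 0 < ε₀ ∧ ∀ ε : ℝ, 0 < ε → ε < ε₀ → a ε + ε ^ m < b ε

/-!
Write `η = cutoff` for a bump function equal to `1` on the unit ball and `0` outside the ball
of radius `2`, and `φ(z) = η(z) - η(2z)` (`annularCutoff`), supported in the annulus
`1/2 ≤ |z| ≤ 2`, so that `∑_{k < j} φ(2^k x) = η(x) - η(2^j x)`. The extension is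
`û_ε(x) = ∑_{k ≤ K(ε)} 2^{-kα} φ(2^k x) u_ε(2^k x) + (1 - η(x)) u_ε(x)` with `2^{K(ε)} ≤ 1/ε`:
near the origin `u` is rebuilt from its values on the fixed annulus, as homogeneity suggests.
Every summand only involves `u_ε` on the annulus, where a single moderateness exponent applies,
and there are at most `1/ε` summands with `2^{k(n + |α|)} ≤ ε^{-(n + |α|)}`, so `û` is moderate.
On a compact set away from the origin and for small `ε`, the telescoping identity turns
`û_ε - u_ε` into a fixed finite sum of the negligible defects `u_ε(2^k x) - 2^{kα} u_ε(x)`.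
-/

open Finset
open scoped ContDiff

lemma eventually_nhdsGT_zero_iff {P : ℝ → Prop} :
    (∀ᶠ ε in 𝓝[>] (0 : ℝ), P ε) ↔ ∃ ε₀, 0 < ε₀ ∧ ∀ ε, 0 < ε → ε < ε₀ → P ε := by
  simp only [(nhdsGT_basis (0 : ℝ)).eventually_iff, Set.mem_Ioo, and_imp]

section Nets

variable {Ω K : Set E} {u : ℝ → E → F}

lemma isModerate_of_eventually (hu : ∀ ε ∈ Ioc (0 : ℝ) 1, ContDiffOn ℝ ∞ (u ε) Ω)
    (hbound : ∀ K, IsCompact K → K ⊆ Ω → ∀ n : ℕ, ∃ N : ℕ, ∃ C : ℝ,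
      ∀ᶠ ε in 𝓝[>] (0 : ℝ), ∀ x ∈ K, ‖iteratedFDerivWithin ℝ n (u ε) Ω x‖ ≤ C * ε⁻¹ ^ N) :
    IsModerate Ω u := by
  refine ⟨hu, fun K hK hKΩ n => ?_⟩
  obtain ⟨N, C, h⟩ := hbound K hK hKΩ n
  obtain ⟨ε₀, hε₀, h⟩ := eventually_nhdsGT_zero_iff.1 h
  refine ⟨N, C, ε₀, hε₀, fun ε hε hεε₀ x hx => ?_⟩
  rw [zpow_neg, zpow_natCast, ← inv_pow]
  exact h ε hε hεε₀ x hx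

lemma isNegligible_of_eventually (hu : ∀ ε ∈ Ioc (0 : ℝ) 1, ContDiffOn ℝ ∞ (u ε) Ω)
    (hbound : ∀ K, IsCompact K → K ⊆ Ω → ∀ n m : ℕ, ∃ C : ℝ,
      ∀ᶠ ε in 𝓝[>] (0 : ℝ), ∀ x ∈ K, ‖iteratedFDerivWithin ℝ n (u ε) Ω x‖ ≤ C * ε ^ m) :
    IsNegligible Ω u := by
  refine ⟨hu, fun K hK hKΩ n m => ?_⟩
  obtain ⟨C, h⟩ := hbound K hK hKΩ n m
  obtain ⟨ε₀, hε₀, h⟩ := eventually_nhdsGT_zero_iff.1 h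
  exact ⟨C, ε₀, hε₀, h⟩

lemma IsModerate.exists_eventually_le (hu : IsModerate Ω u) (hK : IsCompact K) (hKΩ : K ⊆ Ω)
    (n : ℕ) : ∃ N : ℕ, ∃ C : ℝ, 0 ≤ C ∧ ∀ᶠ ε in 𝓝[>] (0 : ℝ), ∀ i ≤ n, ∀ x ∈ K,
      ‖iteratedFDerivWithin ℝ i (u ε) Ω x‖ ≤ C * ε⁻¹ ^ N := by
  choose N C hC using fun i => hu.2 K hK hKΩ i
  refine ⟨∑ i ∈ range (n + 1), N i, ∑ i ∈ range (n + 1), |C i|, by positivity, ?_⟩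
  have hall := (eventually_all_finset (range (n + 1))).2 fun i _ =>
    eventually_nhdsGT_zero_iff.2 (hC i)
  filter_upwards [hall, Ioc_mem_nhdsGT one_pos] with ε hε hε₁ i hi x hx
  have hi' : i ∈ range (n + 1) := mem_range.2 (Nat.lt_succ_of_le hi)
  calc ‖iteratedFDerivWithin ℝ i (u ε) Ω x‖ ≤ C i * ε⁻¹ ^ N i := by
        simpa only [zpow_neg, zpow_natCast, inv_pow] using hε i hi' x hx
    _ ≤ (∑ j ∈ range (n + 1), |C j|) * ε⁻¹ ^ ∑ j ∈ range (n + 1), N j := by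
        refine mul_le_mul ?_ ?_ (pow_nonneg (inv_nonneg.2 hε₁.1.le) _) (by positivity)
        · exact (le_abs_self _).trans (single_le_sum (fun j _ => abs_nonneg (C j)) hi')
        · exact pow_le_pow_right₀ ((one_le_inv₀ hε₁.1).2 hε₁.2)
            (single_le_sum (fun j _ => Nat.zero_le (N j)) hi')

lemma IsNegligible.exists_eventually_le (hu : IsNegligible Ω u) (hK : IsCompact K)
    (hKΩ : K ⊆ Ω) (n m : ℕ) : ∃ C : ℝ, 0 ≤ C ∧ ∀ᶠ ε in 𝓝[>] (0 : ℝ), ∀ i ≤ n, ∀ x ∈ K,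
      ‖iteratedFDerivWithin ℝ i (u ε) Ω x‖ ≤ C * ε ^ m := by
  choose C hC using fun i => hu.2 K hK hKΩ i m
  refine ⟨∑ i ∈ range (n + 1), |C i|, by positivity, ?_⟩
  have hall := (eventually_all_finset (range (n + 1))).2 fun i _ =>
    eventually_nhdsGT_zero_iff.2 (hC i)
  filter_upwards [hall, self_mem_nhdsWithin] with ε hε (hε₀ : 0 < ε) i hi x hx
  have hi' : i ∈ range (n + 1) := mem_range.2 (Nat.lt_succ_of_le hi)
  refine (hε i hi' x hx).trans ?_
  gcongr
  exact (le_abs_self _).trans (single_le_sum (fun j _ => abs_nonneg (C j)) hi')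

end Nets

lemma rpow_neg_le_pow_ceil_abs {t T : ℝ} (α : ℝ) (ht : 1 ≤ t) (htT : t ≤ T) :
    t ^ (-α) ≤ T ^ ⌈|α|⌉₊ :=
  calc t ^ (-α) ≤ t ^ (⌈|α|⌉₊ : ℝ) :=
        Real.rpow_le_rpow_of_exponent_le ht ((neg_le_abs α).trans (Nat.le_ceil _))
    _ = t ^ ⌈|α|⌉₊ := Real.rpow_natCast t _
    _ ≤ T ^ ⌈|α|⌉₊ := pow_le_pow_left₀ (zero_le_one.trans ht) htT _

lemma IsCompact.exists_pos_le_norm {V : Type*} [NormedAddGroup V] {K : Set V}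
    (hK : IsCompact K) (h0 : (0 : V) ∉ K) : ∃ r > 0, ∀ x ∈ K, r ≤ ‖x‖ := by
  obtain ⟨δ, hδ, hsub⟩ := hK.exists_cthickening_subset_open isOpen_compl_singleton
    (subset_compl_singleton_iff.2 h0)
  refine ⟨δ, hδ, fun x hx => ?_⟩
  by_contra! h
  exact hsub (Metric.mem_cthickening_of_dist_le 0 x δ K hx (by simpa [dist_comm] using h.le)) rfl

section Calculus

variable {Ω K : Set E} {b : E → ℝ} {f g : E → F}

lemma IsCompact.exists_bound_iteratedFDeriv (hK : IsCompact K) (hf : ContDiff ℝ ∞ f) (n : ℕ) :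
    ∃ C, ∀ i ≤ n, ∀ x ∈ K, ‖iteratedFDeriv ℝ i f x‖ ≤ C := by
  choose C hC using fun i : ℕ => hK.exists_bound_of_continuousOn
    (hf.continuous_iteratedFDeriv (m := i) (mod_cast le_top)).continuousOn
  refine ⟨∑ i ∈ range (n + 1), |C i|, fun i hi x hx => (hC i x hx).trans ?_⟩
  exact (le_abs_self _).trans
    (single_le_sum (fun j _ => abs_nonneg (C j)) (mem_range.2 (Nat.lt_succ_of_le hi)))

lemma exists_bound_iteratedFDeriv_of_hasCompactSupport (hsupp : HasCompactSupport f)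
    (hf : ContDiff ℝ ∞ f) (n : ℕ) : ∃ C, ∀ i ≤ n, ∀ x, ‖iteratedFDeriv ℝ i f x‖ ≤ C := by
  obtain ⟨C, hC⟩ := hsupp.isCompact.exists_bound_iteratedFDeriv hf n
  refine ⟨max C 0, fun i hi x => ?_⟩
  by_cases hx : x ∈ tsupport f
  · exact (hC i hi x hx).trans (le_max_left _ _)
  · rw [image_eq_zero_of_notMem_tsupport fun h => hx (tsupport_iteratedFDeriv_subset i h),
      norm_zero]
    exact le_max_right _ _

lemma norm_iteratedFDeriv_comp_smul (hf : ContDiff ℝ ∞ f) (c : ℝ) (n : ℕ) (x : E) :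
    ‖iteratedFDeriv ℝ n (fun y => f (c • y)) x‖ = |c| ^ n * ‖iteratedFDeriv ℝ n f (c • x)‖ := by
  rw [iteratedFDeriv_comp_const_smul c (hf.of_le (mod_cast le_top)), norm_smul, norm_pow,
    Real.norm_eq_abs]

lemma norm_iteratedFDeriv_sum_smul_comp_smul_le {ι : Type*} (hf : ContDiff ℝ ∞ f)
    (s : Finset ι) (c r : ι → ℝ) (n : ℕ) (x : E) :
    ‖iteratedFDeriv ℝ n (fun y => ∑ k ∈ s, c k • f (r k • y)) x‖ ≤
      ∑ k ∈ s, |c k| * |r k| ^ n * ‖iteratedFDeriv ℝ n f (r k • x)‖ := by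
  have hterm : ∀ k, ContDiff ℝ ∞ fun y => f (r k • y) :=
    fun k => hf.comp (contDiff_const_smul (r k))
  rw [iteratedFDeriv_sum fun k _ => ((hterm k).const_smul (c k)).of_le (mod_cast le_top),
    Finset.sum_apply]
  refine (norm_sum_le _ _).trans (sum_le_sum fun k _ => le_of_eq ?_)
  rw [iteratedFDeriv_const_smul_apply' ((hterm k).of_le (mod_cast le_top)).contDiffAt,
    norm_smul, Real.norm_eq_abs, norm_iteratedFDeriv_comp_smul hf, mul_assoc]

lemma norm_iteratedFDerivWithin_smul_le_of_le (hΩ : UniqueDiffOn ℝ Ω)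
    (hb : ContDiffOn ℝ ∞ b Ω) (hg : ContDiffOn ℝ ∞ g Ω) {x : E} (hx : x ∈ Ω) {n : ℕ}
    {B G : ℝ} (hB : ∀ i ≤ n, ‖iteratedFDerivWithin ℝ i b Ω x‖ ≤ B)
    (hG : ∀ i ≤ n, ‖iteratedFDerivWithin ℝ i g Ω x‖ ≤ G) :
    ‖iteratedFDerivWithin ℝ n (fun y => b y • g y) Ω x‖ ≤ 2 ^ n * B * G := by
  have hB₀ : 0 ≤ B := (norm_nonneg _).trans (hB 0 n.zero_le)
  calc _ ≤ ∑ i ∈ range (n + 1), (n.choose i : ℝ) * ‖iteratedFDerivWithin ℝ i b Ω x‖ *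
          ‖iteratedFDerivWithin ℝ (n - i) g Ω x‖ :=
        norm_iteratedFDerivWithin_smul_le hb hg hΩ hx (mod_cast le_top)
    _ ≤ ∑ i ∈ range (n + 1), (n.choose i : ℝ) * B * G := by
        gcongr with i hi
        · exact hB i (Nat.lt_succ_iff.1 (mem_range.1 hi))
        · exact hG _ (Nat.sub_le n i)
    _ = 2 ^ n * B * G := by
        rw [← sum_mul, ← sum_mul, ← Nat.cast_sum, Nat.sum_range_choose, Nat.cast_pow,
          Nat.cast_ofNat]

lemma contDiff_smul_of_tsupport_subset (hΩ : IsOpen Ω) (hb : ContDiff ℝ ∞ b)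
    (hg : ContDiffOn ℝ ∞ g Ω) (hsupp : tsupport b ⊆ Ω) : ContDiff ℝ ∞ fun x => b x • g x := by
  refine contDiff_iff_contDiffAt.2 fun x => ?_
  by_cases hx : x ∈ tsupport b
  · exact hb.contDiffAt.smul (hg.contDiffAt (hΩ.mem_nhds (hsupp hx)))
  · refine (contDiffAt_const (c := (0 : F))).congr_of_eventuallyEq ?_
    filter_upwards [notMem_tsupport_iff_eventuallyEq.1 hx] with y hy
    simp [hy]

lemma norm_iteratedFDeriv_smul_le_of_tsupport_subset (hΩ : IsOpen Ω) (hb : ContDiff ℝ ∞ b)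
    (hg : ContDiffOn ℝ ∞ g Ω) (hsupp : tsupport b ⊆ Ω) {x : E} {n : ℕ} {B G : ℝ}
    (hB : ∀ i ≤ n, ‖iteratedFDeriv ℝ i b x‖ ≤ B) (hG₀ : 0 ≤ G)
    (hG : x ∈ tsupport b → ∀ i ≤ n, ‖iteratedFDerivWithin ℝ i g Ω x‖ ≤ G) :
    ‖iteratedFDeriv ℝ n (fun y => b y • g y) x‖ ≤ 2 ^ n * B * G := by
  by_cases hx : x ∈ tsupport b
  · have hxΩ := hsupp hx
    rw [← iteratedFDerivWithin_of_isOpen n hΩ hxΩ]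
    refine norm_iteratedFDerivWithin_smul_le_of_le hΩ.uniqueDiffOn hb.contDiffOn hg hxΩ
      (fun i hi => ?_) (hG hx)
    rw [iteratedFDerivWithin_of_isOpen i hΩ hxΩ]
    exact hB i hi
  · have hB₀ : 0 ≤ B := (norm_nonneg _).trans (hB 0 n.zero_le)
    rw [image_eq_zero_of_notMem_tsupport fun h =>
      hx (tsupport_smul_subset_left _ _ (tsupport_iteratedFDeriv_subset n h)), norm_zero]
    positivity

end Calculus

section Negligible

variable {Ω : Set E} {u : ℝ → E → F}

lemma IsNegligible.smul (hu : IsNegligible Ω u) (hΩ : IsOpen Ω) {b : E → ℝ}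
    (hb : ContDiff ℝ ∞ b) : IsNegligible Ω fun ε x => b x • u ε x := by
  refine isNegligible_of_eventually (fun ε hε => hb.contDiffOn.smul (hu.1 ε hε))
    fun K hK hKΩ n m => ?_
  obtain ⟨B, hB⟩ := hK.exists_bound_iteratedFDeriv hb n
  obtain ⟨C, -, hC⟩ := hu.exists_eventually_le hK hKΩ n m
  refine ⟨2 ^ n * B * C, ?_⟩
  filter_upwards [hC, Ioc_mem_nhdsGT one_pos] with ε hC hε x hx
  refine (norm_iteratedFDerivWithin_smul_le_of_le (B := B) hΩ.uniqueDiffOn hb.contDiffOn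
    (hu.1 ε hε) (hKΩ hx) (fun i hi => ?_) (fun i hi => hC i hi x hx)).trans_eq (by ring)
  rw [iteratedFDerivWithin_of_isOpen i hΩ (hKΩ hx)]
  exact hB i hi x hx

lemma IsNegligible.sum {ι : Type*} {s : Finset ι} {u : ι → ℝ → E → F} (hΩ : IsOpen Ω)
    (hu : ∀ k ∈ s, IsNegligible Ω (u k)) : IsNegligible Ω fun ε x => ∑ k ∈ s, u k ε x := by
  refine isNegligible_of_eventually (fun ε hε => ContDiffOn.sum fun k hk => (hu k hk).1 ε hε)
    fun K hK hKΩ n m => ?_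
  choose C _ hC using fun k (hk : k ∈ s) => (hu k hk).exists_eventually_le hK hKΩ n m
  refine ⟨∑ k ∈ s.attach, C k.1 k.2, ?_⟩
  filter_upwards [(eventually_all_finset s.attach).2 fun k _ => hC k.1 k.2,
    Ioc_mem_nhdsGT one_pos] with ε hC hε x hx
  rw [iteratedFDerivWithin_fun_sum_apply hΩ.uniqueDiffOn (hKΩ hx)
    fun k hk => ((hu k hk).1 ε hε x (hKΩ hx)).of_le (mod_cast le_top), ← s.sum_attach, sum_mul]
  exact (norm_sum_le _ _).trans (sum_le_sum fun k hk => hC k hk n le_rfl x hx)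

lemma IsNegligible.of_eventually_eventuallyEq
    (hu : ∀ ε ∈ Ioc (0 : ℝ) 1, ContDiffOn ℝ ∞ (u ε) Ω)
    (h : ∀ K, IsCompact K → K ⊆ Ω → ∃ v : ℝ → E → F, IsNegligible Ω v ∧
      ∀ᶠ ε in 𝓝[>] (0 : ℝ), ∀ x ∈ K, u ε =ᶠ[𝓝 x] v ε) :
    IsNegligible Ω u := by
  refine isNegligible_of_eventually hu fun K hK hKΩ n m => ?_
  obtain ⟨v, hv, huv⟩ := h K hK hKΩ
  obtain ⟨C, -, hC⟩ := hv.exists_eventually_le hK hKΩ n m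
  refine ⟨C, ?_⟩
  filter_upwards [hC, huv] with ε hC huv x hx
  rw [((huv x hx).filter_mono nhdsWithin_le_nhds).iteratedFDerivWithin_eq
    (huv x hx).eq_of_nhds n]
  exact hC n le_rfl x hx

end Negligible

section Extension

variable [FiniteDimensional ℝ E]

def cutoff : E → ℝ := (⟨1, 2, one_pos, one_lt_two⟩ : ContDiffBump (0 : E))

def annularCutoff (z : E) : ℝ := cutoff z - cutoff ((2 : ℝ) • z)

def dyadicDepth (ε : ℝ) : ℕ := Nat.log 2 ⌊ε⁻¹⌋₊

def annularPart (u : ℝ → E → F) (ε : ℝ) (z : E) : F := annularCutoff z • u ε z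

def dyadicPart (α : ℝ) (u : ℝ → E → F) (ε : ℝ) (x : E) : F :=
  ∑ k ∈ range (dyadicDepth ε + 1), ((2 : ℝ) ^ k) ^ (-α) • annularPart u ε ((2 : ℝ) ^ k • x)

def outerPart (u : ℝ → E → F) (ε : ℝ) (x : E) : F := (1 - cutoff x) • u ε x

def homogeneousExtension (α : ℝ) (u : ℝ → E → F) (ε : ℝ) : E → F :=
  dyadicPart α u ε + outerPart u ε

lemma contDiff_cutoff : ContDiff ℝ ∞ (cutoff : E → ℝ) := ContDiffBump.contDiff _

lemma cutoff_eq_one {x : E} (hx : ‖x‖ ≤ 1) : cutoff x = 1 :=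
  ContDiffBump.one_of_mem_closedBall _ (by simpa using hx)

lemma cutoff_eq_zero {x : E} (hx : 2 ≤ ‖x‖) : cutoff x = 0 :=
  ContDiffBump.zero_of_le_dist _ (by simpa using hx)

lemma contDiff_annularCutoff : ContDiff ℝ ∞ (annularCutoff : E → ℝ) :=
  contDiff_cutoff.sub (contDiff_cutoff.comp (contDiff_const_smul 2))

lemma annularCutoff_eq_zero_of_norm_le {z : E} (hz : ‖z‖ ≤ 1 / 2) : annularCutoff z = 0 := by
  rw [annularCutoff, cutoff_eq_one (by linarith),
    cutoff_eq_one (by rw [norm_smul]; norm_num; linarith), sub_self]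

lemma annularCutoff_eq_zero_of_le_norm {z : E} (hz : 2 ≤ ‖z‖) : annularCutoff z = 0 := by
  rw [annularCutoff, cutoff_eq_zero hz, cutoff_eq_zero (by rw [norm_smul]; norm_num; linarith),
    sub_self]

lemma tsupport_annularCutoff_subset :
    tsupport (annularCutoff : E → ℝ) ⊆ Metric.closedBall 0 2 \ Metric.ball 0 (1 / 2) := by
  refine closure_minimal (fun z hz => ?_) (Metric.isClosed_closedBall.sdiff Metric.isOpen_ball)
  simp only [Set.mem_sdiff, Metric.mem_closedBall, Metric.mem_ball, dist_zero_right, not_lt]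
  constructor
  · by_contra h
    exact hz (annularCutoff_eq_zero_of_le_norm (not_le.1 h).le)
  · by_contra h
    exact hz (annularCutoff_eq_zero_of_norm_le (not_le.1 h).le)

lemma isCompact_annulus : IsCompact (Metric.closedBall (0 : E) 2 \ Metric.ball 0 (1 / 2)) :=
  (isCompact_closedBall 0 2).diff Metric.isOpen_ball

lemma hasCompactSupport_annularCutoff : HasCompactSupport (annularCutoff : E → ℝ) :=
  isCompact_annulus.of_isClosed_subset (isClosed_tsupport _) tsupport_annularCutoff_subset

lemma tsupport_one_sub_cutoff_subset :
    tsupport (fun x : E => 1 - cutoff x) ⊆ (Metric.ball 0 1)ᶜ := by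
  refine closure_minimal (fun x hx h => hx ?_) Metric.isOpen_ball.isClosed_compl
  simp only [cutoff_eq_one (by simpa using (Metric.mem_ball.1 h).le), sub_self]

lemma sum_annularCutoff (x : E) (j : ℕ) :
    ∑ k ∈ range j, annularCutoff ((2 : ℝ) ^ k • x) = cutoff x - cutoff ((2 : ℝ) ^ j • x) := by
  simp only [annularCutoff, smul_smul, ← pow_succ']
  simpa using sum_range_sub' (fun k => cutoff ((2 : ℝ) ^ k • x)) j

lemma two_pow_dyadicDepth_le {ε : ℝ} (hε : ε ∈ Ioc (0 : ℝ) 1) : (2 : ℝ) ^ dyadicDepth ε ≤ ε⁻¹ := by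
  have hfloor : ⌊ε⁻¹⌋₊ ≠ 0 :=
    (Nat.floor_pos.2 ((one_le_inv₀ hε.1).2 hε.2)).ne'
  calc (2 : ℝ) ^ dyadicDepth ε = ((2 ^ dyadicDepth ε : ℕ) : ℝ) := by push_cast; rfl
    _ ≤ ⌊ε⁻¹⌋₊ := by exact_mod_cast Nat.pow_log_le_self 2 hfloor
    _ ≤ ε⁻¹ := Nat.floor_le (inv_nonneg.2 hε.1.le)

lemma dyadicDepth_add_one_le {ε : ℝ} (hε : ε ∈ Ioc (0 : ℝ) 1) :
    ((dyadicDepth ε + 1 : ℕ) : ℝ) ≤ ε⁻¹ :=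
  le_trans (by exact_mod_cast Nat.lt_two_pow_self) (two_pow_dyadicDepth_le hε)

lemma eventually_le_dyadicDepth (k : ℕ) : ∀ᶠ ε in 𝓝[>] (0 : ℝ), k ≤ dyadicDepth ε := by
  refine eventually_nhdsGT_zero_iff.2 ⟨((2 : ℝ) ^ k)⁻¹, by positivity, fun ε hε hεk => ?_⟩
  refine Nat.le_log_of_pow_le one_lt_two (Nat.le_floor ?_)
  rw [Nat.cast_pow, Nat.cast_ofNat]
  exact (le_inv_comm₀ hε (by positivity)).1 hεk.le

end Extension

section ExtensionBounds

variable [FiniteDimensional ℝ E] {α ε : ℝ} {u : ℝ → E → F}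

lemma contDiff_annularPart (hu : ContDiffOn ℝ ∞ (u ε) {0}ᶜ) :
    ContDiff ℝ ∞ (annularPart u ε) :=
  contDiff_smul_of_tsupport_subset isOpen_compl_singleton contDiff_annularCutoff hu
    (tsupport_annularCutoff_subset.trans
      (subset_compl_singleton_iff.2 fun h => h.2 (Metric.mem_ball_self (by norm_num))))

lemma contDiff_outerPart (hu : ContDiffOn ℝ ∞ (u ε) {0}ᶜ) : ContDiff ℝ ∞ (outerPart u ε) :=
  contDiff_smul_of_tsupport_subset isOpen_compl_singleton (contDiff_const.sub contDiff_cutoff) hu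
    (tsupport_one_sub_cutoff_subset.trans
      (subset_compl_singleton_iff.2 fun h => h (Metric.mem_ball_self one_pos)))

lemma contDiff_dyadicPart (hu : ContDiffOn ℝ ∞ (u ε) {0}ᶜ) :
    ContDiff ℝ ∞ (dyadicPart α u ε) :=
  ContDiff.sum fun _ _ => ((contDiff_annularPart hu).comp (contDiff_const_smul _)).const_smul _

lemma contDiff_homogeneousExtension (hu : ContDiffOn ℝ ∞ (u ε) {0}ᶜ) :
    ContDiff ℝ ∞ (homogeneousExtension α u ε) :=
  (contDiff_dyadicPart hu).add (contDiff_outerPart hu)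

namespace IsModerate

lemma exists_norm_iteratedFDeriv_annularPart_le (hu : IsModerate ({0}ᶜ : Set E) u) (n : ℕ) :
    ∃ N : ℕ, ∃ C : ℝ, ∀ᶠ ε in 𝓝[>] (0 : ℝ), ∀ z,
      ‖iteratedFDeriv ℝ n (annularPart u ε) z‖ ≤ C * ε⁻¹ ^ N := by
  have hA : Metric.closedBall (0 : E) 2 \ Metric.ball 0 (1 / 2) ⊆ {0}ᶜ :=
    subset_compl_singleton_iff.2 fun h => h.2 (Metric.mem_ball_self (by norm_num))
  obtain ⟨N, C, hC₀, hC⟩ := hu.exists_eventually_le isCompact_annulus hA n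
  obtain ⟨B, hB⟩ := exists_bound_iteratedFDeriv_of_hasCompactSupport
    (hasCompactSupport_annularCutoff (E := E)) contDiff_annularCutoff n
  refine ⟨N, 2 ^ n * B * C, ?_⟩
  filter_upwards [hC, Ioc_mem_nhdsGT one_pos] with ε hC hε z
  exact (norm_iteratedFDeriv_smul_le_of_tsupport_subset isOpen_compl_singleton
    contDiff_annularCutoff (hu.1 ε hε) (tsupport_annularCutoff_subset.trans hA)
    (fun i hi => hB i hi z) (mul_nonneg hC₀ (pow_nonneg (inv_nonneg.2 hε.1.le) _))
    fun hz i hi => hC i hi z (tsupport_annularCutoff_subset hz)).trans_eq (by ring)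

lemma exists_norm_iteratedFDeriv_dyadicPart_le (hu : IsModerate ({0}ᶜ : Set E) u) (α : ℝ)
    (n : ℕ) : ∃ N : ℕ, ∃ C : ℝ, ∀ᶠ ε in 𝓝[>] (0 : ℝ), ∀ x,
      ‖iteratedFDeriv ℝ n (dyadicPart α u ε) x‖ ≤ C * ε⁻¹ ^ N := by
  obtain ⟨N, C, hC⟩ := hu.exists_norm_iteratedFDeriv_annularPart_le n
  refine ⟨1 + ⌈|α|⌉₊ + n + N, C, ?_⟩
  filter_upwards [hC, Ioc_mem_nhdsGT one_pos] with ε hC hε x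
  set A := C * ε⁻¹ ^ N
  have hA : 0 ≤ A := (norm_nonneg _).trans (hC 0)
  have hε₀ : 0 ≤ ε⁻¹ := inv_nonneg.2 hε.1.le
  have hterm : ∀ k ∈ range (dyadicDepth ε + 1), |((2 : ℝ) ^ k) ^ (-α)| * |(2 : ℝ) ^ k| ^ n *
      ‖iteratedFDeriv ℝ n (annularPart u ε) ((2 : ℝ) ^ k • x)‖ ≤
        ε⁻¹ ^ ⌈|α|⌉₊ * ε⁻¹ ^ n * A := by
    intro k hk
    have h2k : (2 : ℝ) ^ k ≤ ε⁻¹ := (pow_le_pow_right₀ one_le_two (mem_range_succ_iff.1 hk)).trans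
      (two_pow_dyadicDepth_le hε)
    rw [abs_of_pos (by positivity), abs_of_pos (by positivity)]
    exact mul_le_mul (mul_le_mul (rpow_neg_le_pow_ceil_abs α (one_le_pow₀ one_le_two) h2k)
      (pow_le_pow_left₀ (by positivity) h2k n) (by positivity) (pow_nonneg hε₀ _)) (hC _)
      (norm_nonneg _) (mul_nonneg (pow_nonneg hε₀ _) (pow_nonneg hε₀ _))
  calc ‖iteratedFDeriv ℝ n (dyadicPart α u ε) x‖
      ≤ ∑ k ∈ range (dyadicDepth ε + 1), |((2 : ℝ) ^ k) ^ (-α)| * |(2 : ℝ) ^ k| ^ n *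
          ‖iteratedFDeriv ℝ n (annularPart u ε) ((2 : ℝ) ^ k • x)‖ :=
        norm_iteratedFDeriv_sum_smul_comp_smul_le (contDiff_annularPart (hu.1 ε hε)) _ _ _ n x
    _ ≤ ∑ _k ∈ range (dyadicDepth ε + 1), ε⁻¹ ^ ⌈|α|⌉₊ * ε⁻¹ ^ n * A := sum_le_sum hterm
    _ = (dyadicDepth ε + 1 : ℕ) * (ε⁻¹ ^ ⌈|α|⌉₊ * ε⁻¹ ^ n * A) := by
        rw [sum_const, card_range, nsmul_eq_mul]
    _ ≤ ε⁻¹ * (ε⁻¹ ^ ⌈|α|⌉₊ * ε⁻¹ ^ n * A) := by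
        gcongr
        exact dyadicDepth_add_one_le hε
    _ = C * ε⁻¹ ^ (1 + ⌈|α|⌉₊ + n + N) := by ring

lemma exists_norm_iteratedFDeriv_outerPart_le (hu : IsModerate ({0}ᶜ : Set E) u) {K : Set E}
    (hK : IsCompact K) (n : ℕ) :
    ∃ N : ℕ, ∃ C : ℝ, ∀ᶠ ε in 𝓝[>] (0 : ℝ), ∀ x ∈ K,
      ‖iteratedFDeriv ℝ n (outerPart u ε) x‖ ≤ C * ε⁻¹ ^ N := by
  obtain ⟨N, C, hC₀, hC⟩ := hu.exists_eventually_le (hK.diff Metric.isOpen_ball)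
    (subset_compl_singleton_iff.2 fun h => h.2 (Metric.mem_ball_self one_pos)) n
  obtain ⟨B, hB⟩ := hK.exists_bound_iteratedFDeriv (contDiff_const.sub contDiff_cutoff) n
  refine ⟨N, 2 ^ n * B * C, ?_⟩
  filter_upwards [hC, Ioc_mem_nhdsGT one_pos] with ε hC hε x hx
  exact (norm_iteratedFDeriv_smul_le_of_tsupport_subset isOpen_compl_singleton
    (contDiff_const.sub contDiff_cutoff) (hu.1 ε hε) (tsupport_one_sub_cutoff_subset.trans
      (subset_compl_singleton_iff.2 fun h => h (Metric.mem_ball_self one_pos)))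
    (fun i hi => hB i hi x hx) (mul_nonneg hC₀ (pow_nonneg (inv_nonneg.2 hε.1.le) _))
    fun hx' i hi => hC i hi x ⟨hx, tsupport_one_sub_cutoff_subset hx'⟩).trans_eq (by ring)

end IsModerate

lemma isModerate_homogeneousExtension (hu : IsModerate ({0}ᶜ : Set E) u) (α : ℝ) :
    IsModerate univ (homogeneousExtension α u) := by
  refine isModerate_of_eventually
    (fun ε hε => (contDiff_homogeneousExtension (hu.1 ε hε)).contDiffOn) fun K hK _ n => ?_
  obtain ⟨N₁, C₁, h₁⟩ := hu.exists_norm_iteratedFDeriv_dyadicPart_le α n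
  obtain ⟨N₂, C₂, h₂⟩ := hu.exists_norm_iteratedFDeriv_outerPart_le hK n
  refine ⟨N₁ + N₂, |C₁| + |C₂|, ?_⟩
  filter_upwards [h₁, h₂, Ioc_mem_nhdsGT one_pos] with ε h₁ h₂ hε x hx
  have hε₁ : 1 ≤ ε⁻¹ := (one_le_inv₀ hε.1).2 hε.2
  have hsmooth {f : E → F} (hf : ContDiff ℝ ∞ f) : ContDiffAt ℝ n f x :=
    (hf.of_le (mod_cast le_top)).contDiffAt
  rw [iteratedFDerivWithin_univ, homogeneousExtension, iteratedFDeriv_add_apply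
    (hsmooth (contDiff_dyadicPart (hu.1 ε hε))) (hsmooth (contDiff_outerPart (hu.1 ε hε)))]
  calc _ ≤ C₁ * ε⁻¹ ^ N₁ + C₂ * ε⁻¹ ^ N₂ := (norm_add_le _ _).trans (add_le_add (h₁ x) (h₂ x hx))
    _ ≤ |C₁| * ε⁻¹ ^ (N₁ + N₂) + |C₂| * ε⁻¹ ^ (N₁ + N₂) := by
        have hpow (N : ℕ) : 0 ≤ ε⁻¹ ^ N := pow_nonneg (zero_le_one.trans hε₁) N
        exact add_le_add
          (mul_le_mul (le_abs_self _) (pow_le_pow_right₀ hε₁ (by omega)) (hpow _) (abs_nonneg _))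
          (mul_le_mul (le_abs_self _) (pow_le_pow_right₀ hε₁ (by omega)) (hpow _) (abs_nonneg _))
    _ = (|C₁| + |C₂|) * ε⁻¹ ^ (N₁ + N₂) := by ring

end ExtensionBounds

section ExtensionDefect

variable [FiniteDimensional ℝ E] {α ε : ℝ} {u : ℝ → E → F}

lemma homogeneousExtension_sub_eq {k₁ : ℕ} (hk₁ : k₁ ≤ dyadicDepth ε) {y : E}
    (hy : 2 ≤ (2 : ℝ) ^ k₁ * ‖y‖) :
    homogeneousExtension α u ε y - u ε y = ∑ k ∈ range k₁,
      (((2 : ℝ) ^ k) ^ (-α) * annularCutoff ((2 : ℝ) ^ k • y)) •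
        (u ε ((2 : ℝ) ^ k • y) - ((2 : ℝ) ^ k) ^ α • u ε y) := by
  have hnorm (k : ℕ) : ‖(2 : ℝ) ^ k • y‖ = (2 : ℝ) ^ k * ‖y‖ := by
    rw [norm_smul, Real.norm_of_nonneg (by positivity)]
  have hdyadic : dyadicPart α u ε y =
      ∑ k ∈ range k₁, ((2 : ℝ) ^ k) ^ (-α) • annularPart u ε ((2 : ℝ) ^ k • y) := by
    refine (sum_subset (range_subset_range.2 (by omega)) fun k _ hk => ?_).symm
    have hk : k₁ ≤ k := by simpa using hk
    rw [annularPart, annularCutoff_eq_zero_of_le_norm (by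
      rw [hnorm]; exact hy.trans (by gcongr; exact one_le_two)), zero_smul, smul_zero]
  have hcutoff : cutoff y = ∑ k ∈ range k₁, annularCutoff ((2 : ℝ) ^ k • y) := by
    rw [sum_annularCutoff, cutoff_eq_zero (x := (2 : ℝ) ^ k₁ • y) (by rwa [hnorm]), sub_zero]
  have hterm (k : ℕ) : (((2 : ℝ) ^ k) ^ (-α) * annularCutoff ((2 : ℝ) ^ k • y)) •
      (u ε ((2 : ℝ) ^ k • y) - ((2 : ℝ) ^ k) ^ α • u ε y) =
        ((2 : ℝ) ^ k) ^ (-α) • annularPart u ε ((2 : ℝ) ^ k • y) -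
          annularCutoff ((2 : ℝ) ^ k • y) • u ε y := by
    rw [smul_sub, smul_smul, mul_right_comm, Real.rpow_neg (by positivity),
      inv_mul_cancel₀ (by positivity), one_mul, mul_smul, annularPart]
  rw [homogeneousExtension, Pi.add_apply, hdyadic, outerPart, hcutoff,
    sum_congr rfl fun k _ => hterm k, sum_sub_distrib, sub_smul, one_smul, sum_smul]
  abel

lemma isNegligible_homogeneousExtension_sub (hu : IsModerate ({0}ᶜ : Set E) u)
    (hhom : ∀ lam : ℝ, 0 < lam →
      IsNegligible ({0}ᶜ : Set E) fun ε x => u ε (lam • x) - lam ^ α • u ε x) :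
    IsNegligible ({0}ᶜ : Set E) fun ε x => homogeneousExtension α u ε x - u ε x := by
  refine IsNegligible.of_eventually_eventuallyEq
    (fun ε hε => (contDiff_homogeneousExtension (hu.1 ε hε)).contDiffOn.sub (hu.1 ε hε))
    fun K hK hKΩ => ?_
  obtain ⟨r, hr, hrK⟩ := hK.exists_pos_le_norm fun h => hKΩ h rfl
  obtain ⟨k₁, hk₁⟩ := pow_unbounded_of_one_lt (4 / r) one_lt_two
  rw [div_lt_iff₀ hr] at hk₁
  refine ⟨fun ε y => ∑ k ∈ range k₁, (((2 : ℝ) ^ k) ^ (-α) * annularCutoff ((2 : ℝ) ^ k • y)) •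
      (u ε ((2 : ℝ) ^ k • y) - ((2 : ℝ) ^ k) ^ α • u ε y),
    IsNegligible.sum isOpen_compl_singleton fun k _ => (hhom _ (by positivity)).smul
      isOpen_compl_singleton (contDiff_const.mul (contDiff_annularCutoff.comp
        (contDiff_const_smul _))), ?_⟩
  filter_upwards [eventually_le_dyadicDepth k₁] with ε hε x hx
  filter_upwards [(isOpen_lt continuous_const continuous_norm).mem_nhds
    (show r / 2 < ‖x‖ by linarith [hrK x hx])] with y (hy : r / 2 < ‖y‖)
  exact homogeneousExtension_sub_eq hε (by nlinarith)

end ExtensionDefect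

theorem statement_15_general
    (d : ℕ) (α : ℝ)
    (u : ℝ → EuclideanSpace ℝ (Fin d) → ℂ)
    (hu : IsModerate ({0}ᶜ : Set (EuclideanSpace ℝ (Fin d))) u)
    (hhom : ∀ lam : ℝ, 0 < lam →
      IsNegligible ({0}ᶜ : Set (EuclideanSpace ℝ (Fin d)))
        (fun ε x => u ε (lam • x) - ((lam ^ α : ℝ) : ℂ) * u ε x)) :
    ∃ uh : ℝ → EuclideanSpace ℝ (Fin d) → ℂ,
      IsModerate (Set.univ : Set (EuclideanSpace ℝ (Fin d))) uh ∧
      IsNegligible ({0}ᶜ : Set (EuclideanSpace ℝ (Fin d)))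
        (fun ε x => uh ε x - u ε x) := by
  simp only [← Complex.real_smul] at hhom
  exact ⟨homogeneousExtension α u, isModerate_homogeneousExtension hu α,
    isNegligible_homogeneousExtension_sub hu hhom⟩

/-- a nonzero `u ∈ G(ℝ^d∖{0})` homogeneous of degree `α` is extendable to
an element of `G(ℝ^d)`. -/
theorem statement_15
    (d : ℕ) (α : ℝ)
    (u : ℝ → EuclideanSpace ℝ (Fin d) → ℂ)
    (hu : IsModerate ({0}ᶜ : Set (EuclideanSpace ℝ (Fin d))) u)
    (hne : ¬ IsNegligible ({0}ᶜ : Set (EuclideanSpace ℝ (Fin d))) u)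
    (hhom : ∀ lam : ℝ, 0 < lam →
      IsNegligible ({0}ᶜ : Set (EuclideanSpace ℝ (Fin d)))
        (fun ε x => u ε (lam • x) - ((lam ^ α : ℝ) : ℂ) * u ε x)) :
    ∃ uh : ℝ → EuclideanSpace ℝ (Fin d) → ℂ,
      IsModerate (Set.univ : Set (EuclideanSpace ℝ (Fin d))) uh ∧
      IsNegligible ({0}ᶜ : Set (EuclideanSpace ℝ (Fin d)))
        (fun ε x => uh ε x - u ε x) :=
  statement_15_general d α u hu hhom
end
end

section
/- There exists a generalized function u ∈ G(ℝ^d) which is weakly homogeneous of degree 0 but is not associated to any distribution. Concretely: let a_ε := 1 if ε = 1/n for some n ∈ ℕ and a_ε := 0 otherwise, and let u_ε be the constant function a_ε on ℝ^d. Then (u_ε)_ε is moderate and not negligible, u := [(u_ε)_ε] is a generalized constant and hence weakly homogeneous of degree 0, but for every test function φ ∈ C_c^∞(ℝ^d) with ∫φ dx ≠ 0 the net (∫_{ℝ^d} u_ε(x) φ(x) dx)_ε does not converge as ε → 0. -/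
open Set Filter Topology MeasureTheory

noncomputable section

variable {E F : Type*} [NormedAddCommGroup E] [NormedSpace ℝ E]
  [NormedAddCommGroup F] [NormedSpace ℝ F]

lemma aux_iter_const_bound {d : ℕ} (c : ℝ) (n : ℕ) (x : EuclideanSpace ℝ (Fin d)) :
    ‖iteratedFDerivWithin ℝ n (fun _ : EuclideanSpace ℝ (Fin d) => c)
      (Set.univ) x‖ ≤ ‖c‖ := by
  rw [iteratedFDerivWithin_univ]
  cases n with
  | zero => simp [norm_iteratedFDeriv_zero]
  | succ n => rw [iteratedFDeriv_const_of_ne (by simp)]; simp [norm_nonneg]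

open Classical in
/-- the generalized constant given by `a_ε = 1` if `ε = 1/n` (`n ∈ ℕ`) and
`a_ε = 0` otherwise is moderate, not negligible, a generalized constant (hence weakly
homogeneous of degree `0`), but the nets `(∫ u_ε φ)_ε` do not converge for any test
function `φ` with `∫ φ ≠ 0`, so `u` is not associated to a distribution. -/
theorem statement_18
    (d : ℕ) (a : ℝ → ℝ)
    (ha : ∀ ε : ℝ, a ε = if ∃ n : ℕ, ε = 1 / ((n : ℝ) + 1) then (1:ℝ) else 0)
    (u : ℝ → EuclideanSpace ℝ (Fin d) → ℝ)
    (hu : ∀ ε x, u ε x = a ε) :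
    IsModerate (Set.univ : Set (EuclideanSpace ℝ (Fin d))) u ∧
    ¬ IsNegligible (Set.univ : Set (EuclideanSpace ℝ (Fin d))) u ∧
    (NumModerate a ∧
      IsNegligible (Set.univ : Set (EuclideanSpace ℝ (Fin d))) (fun ε x => u ε x - a ε)) ∧
    (∀ lam : ℝ, 0 < lam → ∀ φ : EuclideanSpace ℝ (Fin d) → ℝ,
      ContDiff ℝ (⊤:ℕ∞) φ → HasCompactSupport φ →
      tsupport φ ⊆ ({0}ᶜ : Set (EuclideanSpace ℝ (Fin d))) →
      NumNegligible (fun ε =>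
        (∫ x, u ε (lam • x) * φ x) - (lam ^ (0:ℝ) : ℝ) * ∫ x, u ε x * φ x)) ∧
    (∀ φ : EuclideanSpace ℝ (Fin d) → ℝ,
      ContDiff ℝ (⊤:ℕ∞) φ → HasCompactSupport φ → (∫ x, φ x) ≠ 0 →
      ¬ ∃ L : ℝ, Filter.Tendsto (fun ε => ∫ x, u ε x * φ x) (𝓝[>] (0:ℝ)) (𝓝 L)) := by
  have ha01 : ∀ ε : ℝ, a ε = 0 ∨ a ε = 1 := by
    intro ε; rw [ha]; split_ifs <;> simp
  have habs : ∀ ε : ℝ, ‖a ε‖ ≤ 1 := by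
    intro ε; rcases ha01 ε with h | h <;> simp [h]
  have huconst : ∀ ε : ℝ, u ε = fun _ => a ε := fun ε => funext fun x => hu ε x
  have ha_one : ∀ n : ℕ, a (1 / ((n : ℝ) + 1)) = 1 := by
    intro n; rw [ha, if_pos ⟨n, rfl⟩]
  have ha_zero : ∀ n : ℕ, a (2 / (2 * (n : ℝ) + 3)) = 0 := by
    intro n; rw [ha, if_neg]
    rintro ⟨m, hm⟩
    have h1 : (2 * (n : ℝ) + 3) ≠ 0 := by positivity
    have h2 : ((m : ℝ) + 1) ≠ 0 := by positivity
    field_simp at hm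
    have h3 : (2 * m + 2 : ℕ) = 2 * n + 3 := by
      have h4 : ((2 * m + 2 : ℕ) : ℝ) = ((2 * n + 3 : ℕ) : ℝ) := by push_cast; linarith
      exact_mod_cast h4
    omega
  refine ⟨?_, ?_, ?_, ?_, ?_⟩
  · -- moderate
    refine ⟨fun ε _ => by rw [huconst ε]; exact contDiffOn_const, ?_⟩
    intro K _ _ n
    refine ⟨0, 1, 1, one_pos, fun ε hε hε1 x _ => ?_⟩
    rw [huconst ε]
    have h := aux_iter_const_bound (d := d) (a ε) n x
    calc ‖iteratedFDerivWithin ℝ n (fun _ => a ε) Set.univ x‖ ≤ ‖a ε‖ := h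
      _ ≤ 1 := habs ε
      _ = 1 * ε ^ (-(0:ℕ):ℤ) := by simp
  · -- not negligible
    rintro ⟨_, h⟩
    obtain ⟨C, ε₀, hε₀, hb⟩ := h {0} isCompact_singleton (Set.subset_univ _) 0 1
    obtain ⟨n, hn⟩ := exists_nat_gt (max (1 / ε₀) |C|)
    have hn1 : (0:ℝ) < (n : ℝ) + 1 := by positivity
    set ε := 1 / ((n : ℝ) + 1) with hεdef
    have hεpos : 0 < ε := by positivity
    have hεlt : ε < ε₀ := by
      rw [hεdef, div_lt_iff₀ hn1, ← div_lt_iff₀' hε₀]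
      calc 1 / ε₀ ≤ max (1 / ε₀) |C| := le_max_left _ _
        _ < n := hn
        _ < (n : ℝ) + 1 := by linarith
    have hbound := hb ε hεpos hεlt 0 rfl
    rw [iteratedFDerivWithin_zero_eq_comp] at hbound
    simp only [Function.comp_apply] at hbound
    have hval : ‖u ε 0‖ = 1 := by rw [hu, hεdef, ha_one]; norm_num
    have h1 : (1:ℝ) ≤ C * ε ^ 1 := by
      rw [← hval]
      simpa using hbound
    have h2 : C * ε ^ 1 < 1 := by
      have hC : |C| < (n : ℝ) + 1 := by
        calc |C| ≤ max (1 / ε₀) |C| := le_max_right _ _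
          _ < n := hn
          _ < (n : ℝ) + 1 := by linarith
      have hle : C * ε ^ 1 ≤ |C| * ε := by
        rw [pow_one]
        exact mul_le_mul_of_nonneg_right (le_abs_self C) hεpos.le
      calc C * ε ^ 1 ≤ |C| * ε := hle
        _ < ((n : ℝ) + 1) * ε := mul_lt_mul_of_pos_right hC hεpos
        _ = 1 := by rw [hεdef]; field_simp
    linarith
  · -- generalized constant
    constructor
    · exact ⟨0, 1, 1, one_pos, fun ε hε hε1 => by simpa using habs ε⟩
    · have hz : (fun ε (x : EuclideanSpace ℝ (Fin d)) => u ε x - a ε)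
          = fun ε _ => (0:ℝ) := by
        funext ε x; rw [hu]; ring
      rw [hz]
      refine ⟨fun ε _ => contDiffOn_const, ?_⟩
      intro K _ _ n m
      refine ⟨0, 1, one_pos, fun ε hε hε1 x _ => ?_⟩
      have h := aux_iter_const_bound (d := d) (0:ℝ) n x
      simpa using h
  · -- weakly homogeneous of degree 0
    intro lam hlam φ hφ hφc hφs m
    refine ⟨0, 1, one_pos, fun ε hε hε1 => ?_⟩
    simp [hu, Real.rpow_zero]
  · -- not associated
    rintro φ hφ hφc hI ⟨L, hL⟩
    have hcomp : ∀ ε : ℝ, (∫ x, u ε x * φ x) = a ε * ∫ x, φ x := by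
      intro ε
      simp only [hu]
      exact integral_const_mul _ _
    have hs1 : Tendsto (fun n : ℕ => 1 / ((n : ℝ) + 1)) atTop (𝓝[>] (0:ℝ)) := by
      apply tendsto_nhdsWithin_of_tendsto_nhds_of_eventually_within
      · exact tendsto_one_div_add_atTop_nhds_zero_nat
      · filter_upwards with n
        exact Set.mem_Ioi.mpr (by positivity)
    have hs2 : Tendsto (fun n : ℕ => 2 / (2 * (n : ℝ) + 3)) atTop (𝓝[>] (0:ℝ)) := by
      apply tendsto_nhdsWithin_of_tendsto_nhds_of_eventually_within
      · have h0 : Tendsto (fun n : ℕ => 2 * (n : ℝ) + 3) atTop atTop := by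
          apply Filter.tendsto_atTop_add_const_right
          exact (tendsto_natCast_atTop_atTop).const_mul_atTop two_pos
        have := h0.inv_tendsto_atTop
        have h2 : Tendsto (fun n : ℕ => 2 * (2 * (n : ℝ) + 3)⁻¹) atTop (𝓝 (2 * 0)) :=
          (tendsto_const_nhds).mul this
        simpa [div_eq_mul_inv] using h2
      · filter_upwards with n
        exact Set.mem_Ioi.mpr (by positivity)
    have hL1 : Tendsto (fun n : ℕ => ∫ x, u (1 / ((n : ℝ) + 1)) x * φ x) atTop (𝓝 L) :=
      hL.comp hs1
    have hL2 : Tendsto (fun n : ℕ => ∫ x, u (2 / (2 * (n : ℝ) + 3)) x * φ x) atTop (𝓝 L) :=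
      hL.comp hs2
    have he1 : (fun n : ℕ => ∫ x, u (1 / ((n : ℝ) + 1)) x * φ x)
        = fun _ => ∫ x, φ x := by
      funext n; rw [hcomp, ha_one]; ring
    have he2 : (fun n : ℕ => ∫ x, u (2 / (2 * (n : ℝ) + 3)) x * φ x)
        = fun _ => (0:ℝ) := by
      funext n; rw [hcomp, ha_zero]; ring
    rw [he1] at hL1
    rw [he2] at hL2
    have h1 : (∫ x, φ x) = L := tendsto_nhds_unique tendsto_const_nhds hL1
    have h2 : (0:ℝ) = L := tendsto_nhds_unique tendsto_const_nhds hL2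
    exact hI (h1.trans h2.symm)
end
end
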